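/- In the instance of Example 1, the strong EEFX share of agent 1 strictly exceeds her minimum EFX share: θ_1 > 3 + 3ε ≥ MXS_1 (in fact MXS_1 ≤ 3 < θ_1). -/
import Mathlib

open Finset

def IsAdditive {ι : Type*} [DecidableEq ι] (v : Finset ι → ℝ) : Prop :=
  ∀ S : Finset ι, v S = ∑ g ∈ S, v {g}

def IsPartition {ι : Type*} [DecidableEq ι] (A : Finset ι) {k : ℕ} (P : Fin k → Finset ι) : Prop :=
  (∀ i j : Fin k, i ≠ j → Disjoint (P i) (P j)) ∧ Finset.univ.biUnion P = A

def EEFXFeasible {ι : Type*} [DecidableEq ι] (M : Finset ι) (v : Finset ι → ℝ) (n : ℕ)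
    (B : Finset ι) : Prop :=
  ∃ P : Fin (n - 1) → Finset ι, IsPartition (M \ B) P ∧
    ∀ j, ∀ g ∈ P j, v (P j \ {g}) ≤ v B

def NonDegenerate {ι : Type*} [DecidableEq ι] (M : Finset ι) (v : Finset ι → ℝ) : Prop :=
  ∀ S ⊆ M, ∀ T ⊆ M, S ≠ T → v S ≠ v T

noncomputable def strongShare {ι : Type*} [DecidableEq ι] (M : Finset ι) (v : Finset ι → ℝ)
    (n : ℕ) : ℝ :=
  sInf {x | ∃ S ⊆ M, v S = x ∧ ∀ T ⊆ M, x ≤ v T → EEFXFeasible M v n T}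

noncomputable def MXS {ι : Type*} [DecidableEq ι] (M : Finset ι) (v : Finset ι → ℝ)
    (n : ℕ) : ℝ :=
  sInf {x | ∃ S ⊆ M, v S = x ∧ EEFXFeasible M v n S}

noncomputable def MMS {ι : Type*} [DecidableEq ι] (M : Finset ι) (v : Finset ι → ℝ)
    (n : ℕ) : ℝ :=
  sSup {x | ∃ P : Fin n → Finset ι, IsPartition M P ∧ x = ⨅ j, v (P j)}

def ResidualSelfFeasible {ι : Type*} [DecidableEq ι] (M : Finset ι) (v : Finset ι → ℝ)
    (n : ℕ) (t : ℝ) : Prop :=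
  ∀ k : ℕ, k < n → ∀ S : Fin k → Finset ι,
    (∀ j, S j ⊆ M) → (∀ i j : Fin k, i ≠ j → Disjoint (S i) (S j)) → (∀ j, v (S j) < t) →
    ∃ X : Fin (n - k) → Finset ι,
      IsPartition (M \ Finset.univ.biUnion S) X ∧ ∀ j, t ≤ v (X j)

noncomputable def RMMS {ι : Type*} [DecidableEq ι] (M : Finset ι) (v : Finset ι → ℝ)
    (n : ℕ) : ℝ :=
  sSup {t | ResidualSelfFeasible M v n t}

noncomputable def w17 : Fin 10 → ℝ :=
  ![1/100, 3 - 1/100, 1 + 1/100, 1 + 1/100, 1 + 1/100,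
    1 - 2/100, 1 - 2/100, 1 - 1/100, 1 - 1/100, 1]

noncomputable def v17 (S : Finset (Fin 10)) : ℝ := ∑ g ∈ S, w17 g

/-- Integer (×100) weights. -/
def u17 : Fin 10 → ℕ := fun g => [1, 299, 101, 101, 101, 98, 98, 99, 99, 100].getD g.val 0

lemma v17_eq' (S : Finset (Fin 10)) : v17 S = ((∑ g ∈ S, u17 g : ℕ) : ℝ) / 100 := by
  rw [v17]
  push_cast
  rw [Finset.sum_div]
  refine Finset.sum_congr rfl fun g _ => ?_
  fin_cases g <;> norm_num [w17, u17]

lemma v17_le_iff (X Y : Finset (Fin 10)) :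
    v17 X ≤ v17 Y ↔ (∑ g ∈ X, u17 g) ≤ ∑ g ∈ Y, u17 g := by
  rw [v17_eq', v17_eq', div_le_div_iff_of_pos_right (by norm_num : (0:ℝ) < 100)]
  exact_mod_cast Iff.rfl

-- the residual set
def R17 : Finset (Fin 10) := (univ : Finset (Fin 10)) \ {2,3,4}

lemma sum_con {A : Finset (Fin 10)} (h : ∀ g ∈ A, ∑ x ∈ A \ {g}, u17 x ≤ 303) :
    ∀ g ∈ A, ∑ x ∈ A, u17 x ≤ 303 + u17 g := by
  intro g hg
  have := h g hg
  have h2 : ∑ x ∈ A \ {g}, u17 x + u17 g = ∑ x ∈ A, u17 x := by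
    rw [Finset.sdiff_singleton_eq_erase, Finset.sum_erase_add _ _ hg]
  omega

lemma aux17 (A : Finset (Fin 10)) (hA : A ⊆ R17) (h1 : (1 : Fin 10) ∈ A)
    (cA : ∀ g ∈ A, ∑ x ∈ A, u17 x ≤ 303 + u17 g)
    (cB : ∀ g ∈ R17 \ A, ∑ x ∈ R17 \ A, u17 x ≤ 303 + u17 g) : False := by
  have htot : ∑ x ∈ R17 \ A, u17 x + ∑ x ∈ A, u17 x = 794 := by
    rw [Finset.sum_sdiff hA, show ∑ x ∈ R17, u17 x = 794 from by decide]
  have hw100 : ∀ g ∈ R17, g ≠ 1 → u17 g ≤ 100 := by decide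
  have hw98 : ∀ g ∈ R17, g ≠ 0 → g ≠ 1 → 98 ≤ u17 g := by decide
  by_cases h0 : (0 : Fin 10) ∈ A
  · by_cases hex : ∃ g ∈ A, g ≠ 0 ∧ g ≠ 1
    · obtain ⟨g, hg, hg0, hg1⟩ := hex
      have hsub : ({0, 1, g} : Finset (Fin 10)) ⊆ A := by
        intro x hx
        simp only [Finset.mem_insert, Finset.mem_singleton] at hx
        rcases hx with rfl | rfl | rfl <;> assumption
      have hsum3 : ∑ x ∈ ({0, 1, g} : Finset (Fin 10)), u17 x = 300 + u17 g := by
        rw [Finset.sum_insert (by simp [hg0.symm, Ne.symm]), Finset.sum_insert (by simp [hg1.symm]),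
          Finset.sum_singleton]
        have hu0 : u17 0 = 1 := rfl
        have hu1 : u17 1 = 299 := rfl
        omega
      have hle : ∑ x ∈ ({0, 1, g} : Finset (Fin 10)), u17 x ≤ ∑ x ∈ A, u17 x :=
        Finset.sum_le_sum_of_subset hsub
      have hA0 := cA 0 h0
      have h98 := hw98 g (hA hg) hg0 hg1
      have hu0 : u17 0 = 1 := rfl
      omega
    · push_neg at hex
      have hAeq : A = {0, 1} := by
        apply Finset.Subset.antisymm
        · intro x hx
          rcases eq_or_ne x 0 with rfl | hx0
          · simp
          · simp [hex x hx hx0]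
        · intro x hx
          simp only [Finset.mem_insert, Finset.mem_singleton] at hx
          rcases hx with rfl | rfl <;> assumption
      subst hAeq
      have h5 : (5 : Fin 10) ∈ R17 \ ({0,1} : Finset (Fin 10)) := by decide
      have hB5 := cB 5 h5
      have hs : ∑ x ∈ R17 \ ({0,1} : Finset (Fin 10)), u17 x = 494 := by decide
      have hu5 : u17 5 = 98 := rfl
      omega
  · have h0B : (0 : Fin 10) ∈ R17 \ A := by
      simp only [Finset.mem_sdiff]
      exact ⟨by decide, h0⟩
    have hB := cB 0 h0B
    simp only [show u17 0 = 1 from rfl] at hB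
    by_cases hex : ∃ g ∈ A, g ≠ 1
    · obtain ⟨g, hg, hg1⟩ := hex
      have := cA g hg
      have := hw100 g (hA hg) hg1
      omega
    · push_neg at hex
      have hsub : A ⊆ {1} := fun x hx => by simp [hex x hx]
      have : ∑ x ∈ A, u17 x ≤ 299 := by
        calc ∑ x ∈ A, u17 x ≤ ∑ x ∈ ({1} : Finset (Fin 10)), u17 x :=
          Finset.sum_le_sum_of_subset hsub
        _ = 299 := by decide
      omega

lemma key17 (A : Finset (Fin 10)) (hA : A ⊆ R17)
    (hcA : ∀ g ∈ A, ∑ x ∈ A \ {g}, u17 x ≤ 303)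
    (hcB : ∀ g ∈ R17 \ A, ∑ x ∈ (R17 \ A) \ {g}, u17 x ≤ 303) : False := by
  by_cases h1 : (1 : Fin 10) ∈ A
  · exact aux17 A hA h1 (sum_con hcA) (sum_con hcB)
  · have h1B : (1 : Fin 10) ∈ R17 \ A := Finset.mem_sdiff.mpr ⟨by decide, h1⟩
    have heq : R17 \ (R17 \ A) = A := Finset.sdiff_sdiff_eq_self hA
    refine aux17 (R17 \ A) Finset.sdiff_subset h1B (sum_con hcB) ?_
    rw [heq]
    exact sum_con hcA

lemma feas01 : EEFXFeasible (univ : Finset (Fin 10)) v17 3 {0,1} := by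
  refine ⟨![{2,7,8,9}, {3,4,5,6}], ⟨by decide, by decide⟩, ?_⟩
  intro j g hg
  rw [v17_le_iff]
  have h : ∀ j : Fin 2, ∀ g ∈ (![{2,7,8,9}, {3,4,5,6}] : Fin 2 → Finset (Fin 10)) j,
      (∑ x ∈ (![{2,7,8,9}, {3,4,5,6}] : Fin 2 → Finset (Fin 10)) j \ {g}, u17 x) ≤
        ∑ x ∈ ({0,1} : Finset (Fin 10)), u17 x := by decide
  exact h j g hg

lemma feas_univ : EEFXFeasible (univ : Finset (Fin 10)) v17 3 univ := by
  refine ⟨fun _ => ∅, ⟨fun i j _ => by simp, by ext a; simp⟩, by simp⟩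

lemma bdd : BddBelow {x | ∃ S ⊆ (univ : Finset (Fin 10)), v17 S = x ∧ EEFXFeasible univ v17 3 S} := by
  refine ⟨0, fun x hx => ?_⟩
  obtain ⟨S, -, rfl, -⟩ := hx
  rw [v17_eq']
  positivity

lemma mxs_le_three : MXS (univ : Finset (Fin 10)) v17 3 ≤ 3 := by
  have h3 : v17 ({0,1} : Finset (Fin 10)) = 3 := by
    rw [v17_eq', show (∑ g ∈ ({0,1} : Finset (Fin 10)), u17 g) = 300 from by decide]
    norm_num
  exact csInf_le bdd ⟨{0,1}, by simp, h3, feas01⟩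

lemma u17_pos : ∀ g, 0 < u17 g := by decide

lemma ss_nonempty :
    (v17 (univ : Finset (Fin 10))) ∈ {x | ∃ S ⊆ (univ : Finset (Fin 10)), v17 S = x ∧
      ∀ T ⊆ (univ : Finset (Fin 10)), x ≤ v17 T → EEFXFeasible univ v17 3 T} := by
  refine ⟨univ, subset_rfl, rfl, fun T hT hle => ?_⟩
  have hTu : T = univ := by
    by_contra hne
    obtain ⟨g, hg, hgT⟩ := Finset.exists_of_ssubset (hT.ssubset_of_ne hne)
    have hlt : (∑ x ∈ T, u17 x) < ∑ x ∈ (univ : Finset (Fin 10)), u17 x :=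
      Finset.sum_lt_sum_of_subset hT hg hgT (u17_pos g) (fun _ _ _ => Nat.zero_le _)
    have := (v17_le_iff univ T).mp hle
    omega
  rw [hTu]
  exact feas_univ

lemma ss_lb : (304 : ℝ)/100 ≤ strongShare (univ : Finset (Fin 10)) v17 3 := by
  apply le_csInf ⟨_, ss_nonempty⟩
  rintro x ⟨S, hS, rfl, hall⟩
  rw [v17_eq']
  rw [div_le_div_iff_of_pos_right (by norm_num : (0:ℝ) < 100)]
  by_contra h
  push_neg at h
  have hN : (∑ g ∈ S, u17 g) ≤ 303 := by exact_mod_cast Nat.lt_succ_iff.mp (by exact_mod_cast h)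
  have hle : v17 S ≤ v17 ({2,3,4} : Finset (Fin 10)) := by
    rw [v17_le_iff, show (∑ g ∈ ({2,3,4} : Finset (Fin 10)), u17 g) = 303 from by decide]
    exact hN
  obtain ⟨P, ⟨hdisj, hunion⟩, hval⟩ := hall {2,3,4} (by simp) hle
  have hPU : P 0 ∪ P 1 = R17 := by
    rw [show R17 = (univ : Finset (Fin 10)) \ {2,3,4} from rfl, ← hunion]
    ext a; simp [Fin.exists_fin_two]
  have hP0 : P 0 ⊆ R17 := hPU ▸ Finset.subset_union_left
  have hP1 : P 1 = R17 \ P 0 := by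
    have hd := hdisj 0 1 (by decide)
    rw [← hPU]
    ext a
    simp only [Finset.mem_sdiff, Finset.mem_union]
    constructor
    · intro ha; exact ⟨Or.inr ha, Finset.disjoint_right.mp hd ha⟩
    · rintro ⟨h1 | h1, h2⟩
      · exact absurd h1 h2
      · exact h1
  have hub : ∀ j, ∀ g ∈ P j, (∑ x ∈ P j \ {g}, u17 x) ≤ 303 := by
    intro j g hg
    have := (v17_le_iff (P j \ {g}) {2,3,4}).mp (hval j g hg)
    rwa [show (∑ g ∈ ({2,3,4} : Finset (Fin 10)), u17 g) = 303 from by decide] at this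
  refine key17 (P 0) hP0 (fun g hg => hub 0 g hg) (fun g hg => ?_)
  rw [← hP1] at hg ⊢
  exact hub 1 g hg

theorem stmt17 :
    MXS Finset.univ v17 3 ≤ 3 ∧
    MXS Finset.univ v17 3 ≤ 3 + 3 * (1/100) ∧
    3 + 3 * (1/100) < strongShare Finset.univ v17 3 := by
  refine ⟨mxs_le_three, by linarith [mxs_le_three], by linarith [ss_lb]⟩
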